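/- Let N ∈ ℕ, let L : ℂ^N → ℂ^N be a Hermitian (self-adjoint) linear map, β ∈ ℝ, C₀ > 0 and ρ(ψ) = √(Σ_j |ψ_j|⁴ + C₀). Let ψ : ℝ → ℂ^N and q : ℝ → ℝ be differentiable and satisfy, for all t, ψ'(t) = −i • (L (ψ t) + (β q t / ρ(ψ t)) • (|ψ t|²(ψ t))) and q'(t) = (2 / ρ(ψ t)) * Re⟨ψ'(t), |ψ t|²(ψ t)⟩. Then the modified energy t ↦ Re⟨L (ψ t), ψ t⟩ + (β/2) (q t)² is constant in t. -/

import Mathlib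

open Finset Complex

/-- The componentwise cubic nonlinearity `|ψ|²ψ`. -/
noncomputable def nlVec {N : ℕ} (ψ : EuclideanSpace ℂ (Fin N)) : EuclideanSpace ℂ (Fin N) :=
  WithLp.toLp 2 (fun j => (‖ψ j‖ : ℂ) ^ 2 * ψ j)

/-- The inner product `⟨x, y⟩ = ∑ j, x j * conj (y j)` of the paper. -/
noncomputable def pInner {N : ℕ} (x y : EuclideanSpace ℂ (Fin N)) : ℂ :=
  ∑ j, x j * (starRingEnd ℂ) (y j)

/-- The SAV denominator `ρ(ψ) = √(∑ j |ψ j|⁴ + C₀)`. -/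
noncomputable def savRho {N : ℕ} (C₀ : ℝ) (ψ : EuclideanSpace ℂ (Fin N)) : ℝ :=
  Real.sqrt ((∑ j, ‖ψ j‖ ^ 4) + C₀)

/-!
Along a solution the energy changes at rate `2 Re⟨ψ', Lψ⟩ + β q q'`: the symmetry of `L` produces
the first term, and the `q`-equation turns the second into `2 Re⟨ψ', (βq/ρ) |ψ|²ψ⟩`. Their sum is
`2 Re⟨ψ', w⟩` with `ψ' = -i w`, which vanishes because `⟨w, w⟩` is real.
-/

open scoped InnerProductSpace

lemma pInner_eq_inner {N : ℕ} (x y : EuclideanSpace ℂ (Fin N)) : pInner x y = ⟪y, x⟫_ℂ := by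
  simp [pInner, PiLp.inner_apply, RCLike.inner_apply]

lemma LinearMap.isSymmetric_of_pInner {N : ℕ}
    {L : EuclideanSpace ℂ (Fin N) →ₗ[ℂ] EuclideanSpace ℂ (Fin N)}
    (hL : ∀ x y, pInner (L x) y = pInner x (L y)) : L.IsSymmetric := fun x y => by
  simpa only [pInner_eq_inner] using (hL y x).symm

section
variable {E : Type*} [NormedAddCommGroup E] [InnerProductSpace ℂ E]

theorem LinearMap.IsSymmetric.hasDerivAt_re_inner_self_apply [FiniteDimensional ℂ E]
    {T : E →ₗ[ℂ] E} (hT : T.IsSymmetric) {ψ : ℝ → E} {v : E} {t : ℝ}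
    (hψ : HasDerivAt ψ v t) :
    HasDerivAt (fun s => re ⟪ψ s, T (ψ s)⟫_ℂ) (2 * re ⟪v, T (ψ t)⟫_ℂ) t := by
  have hTψ : HasDerivAt (fun s => T (ψ s)) (T v) t :=
    (T.toContinuousLinearMap.restrictScalars ℝ).hasFDerivAt.comp_hasDerivAt t hψ
  refine (reCLM.hasFDerivAt.comp_hasDerivAt t (hψ.inner ℂ hTψ)).congr_deriv ?_
  rw [reCLM_apply, add_re, ← hT, ← inner_conj_symm (T (ψ t)), conj_re]
  ring

theorem re_inner_neg_I_smul_self (w : E) : re ⟪-I • w, w⟫_ℂ = 0 := by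
  simp [inner_smul_left, ← ofReal_pow]

theorem sav_energy_rate_eq_zero {x g v : E} {β q q' ρ : ℝ}
    (hv : v = -I • (x + ((β * q / ρ : ℝ) : ℂ) • g)) (hq' : q' = 2 / ρ * re ⟪g, v⟫_ℂ) :
    2 * re ⟪v, x⟫_ℂ + β * q * q' = 0 := by
  have hnl : β * q * q' = 2 * re ⟪v, ((β * q / ρ : ℝ) : ℂ) • g⟫_ℂ := by
    rw [hq', inner_smul_right, re_ofReal_mul, ← inner_conj_symm g, conj_re]
    ring
  rw [hnl, ← mul_add, ← add_re, ← inner_add_right, hv, re_inner_neg_I_smul_self, mul_zero]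

end

theorem SAV_energy_conservation_general {N : ℕ}
    (L : EuclideanSpace ℂ (Fin N) →ₗ[ℂ] EuclideanSpace ℂ (Fin N))
    (hL : ∀ x y, pInner (L x) y = pInner x (L y))
    (β : ℝ) (C₀ : ℝ)
    (ψ : ℝ → EuclideanSpace ℂ (Fin N)) (q : ℝ → ℝ)
    (hψ : Differentiable ℝ ψ) (hq : Differentiable ℝ q)
    (hode₁ : ∀ t, deriv ψ t = (-Complex.I) •
        (L (ψ t) + ((β * q t / savRho C₀ (ψ t) : ℝ) : ℂ) • nlVec (ψ t)))
    (hode₂ : ∀ t, deriv q t =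
        (2 / savRho C₀ (ψ t)) * (pInner (deriv ψ t) (nlVec (ψ t))).re) :
    ∀ t₁ t₂ : ℝ,
      (pInner (L (ψ t₁)) (ψ t₁)).re + (β / 2) * (q t₁) ^ 2
        = (pInner (L (ψ t₂)) (ψ t₂)).re + (β / 2) * (q t₂) ^ 2 := by
  have hE : ∀ t, HasDerivAt (fun s => re ⟪ψ s, L (ψ s)⟫_ℂ + β / 2 * q s ^ 2) 0 t := fun t => by
    have hψt := ((LinearMap.isSymmetric_of_pInner hL).hasDerivAt_re_inner_self_apply
      (hψ t).hasDerivAt)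
    refine (hψt.add (((hq t).hasDerivAt.pow 2).const_mul (β / 2))).congr_deriv ?_
    rw [← sav_energy_rate_eq_zero (hode₁ t) ((hode₂ t).trans (by rw [pInner_eq_inner]))]
    ring
  intro t₁ t₂
  simpa only [pInner_eq_inner] using
    is_const_of_deriv_eq_zero (fun t => (hE t).differentiableAt) (fun t => (hE t).deriv) t₁ t₂

/-- Modified energy conservation law of the SAV reformulated system (7): along any
solution `(ψ, q)`, the modified energy `Re⟨Lψ, ψ⟩ + (β/2) q²` is constant in `t`. -/
theorem SAV_energy_conservation {N : ℕ}
    (L : EuclideanSpace ℂ (Fin N) →ₗ[ℂ] EuclideanSpace ℂ (Fin N))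
    (hL : ∀ x y, pInner (L x) y = pInner x (L y))
    (β : ℝ) (C₀ : ℝ) (hC₀ : 0 < C₀)
    (ψ : ℝ → EuclideanSpace ℂ (Fin N)) (q : ℝ → ℝ)
    (hψ : Differentiable ℝ ψ) (hq : Differentiable ℝ q)
    (hode₁ : ∀ t, deriv ψ t = (-Complex.I) •
        (L (ψ t) + ((β * q t / savRho C₀ (ψ t) : ℝ) : ℂ) • nlVec (ψ t)))
    (hode₂ : ∀ t, deriv q t =
        (2 / savRho C₀ (ψ t)) * (pInner (deriv ψ t) (nlVec (ψ t))).re) :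
    ∀ t₁ t₂ : ℝ,
      (pInner (L (ψ t₁)) (ψ t₁)).re + (β / 2) * (q t₁) ^ 2
        = (pInner (L (ψ t₂)) (ψ t₂)).re + (β / 2) * (q t₂) ^ 2 :=
  SAV_energy_conservation_general L hL β C₀ ψ q hψ hq hode₁ hode₂
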